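/- arXiv:1901.02581 — 6 statements merged into one kernel-verified Lean document; each statement's English description precedes it below -/
import Mathlib

section
/- If U, V, A, F, Q, E are real numbers and for λ>0 one sets u = exp(U/λ), v = exp(V/λ), a = exp(A/λ), f = exp(F/λ), q = exp(Q/λ), ε = exp(E/λ), then λ·log of the expression (ε⁻¹u + au + afqv/(u+q)) / (ε⁻¹ + au + afv/(u+q)) converges as λ→0+ to max(U−E, A+U, A+F+Q+V−max(U,Q)) − max(−E, A+U, A+F+V−max(U,Q)). -/
/-!
Under `l * log`, as `l → 0⁺`, the exponentials `exp (a / l)` become their exponents, products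
and quotients become sums and differences, and sums become maxima (`max ≤ log of sum ≤ max + log 2`
after scaling). The Oregonator expression is built from exponentials by these operations, so its
limit is read off term by term.
-/

open Filter Real Topology

lemma log_add_le_log_two_add_max {x y : ℝ} (hx : 0 < x) (hy : 0 < y) :
    log (x + y) ≤ log 2 + max (log x) (log y) := by
  have key : ∀ {a b : ℝ}, 0 < a → a ≤ b → log (a + b) ≤ log 2 + log b := fun ha hab => by
    rw [← log_mul two_ne_zero (ha.trans_le hab).ne']
    exact log_le_log (by linarith) (by linarith)
  rcases le_total x y with hxy | hyx
  · exact (key hx hxy).trans (by gcongr; exact le_max_right _ _)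
  · rw [add_comm]
    exact (key hy hyx).trans (by gcongr; exact le_max_left _ _)

/-- Positivity is required because `Real.log` is even and sends `0` to `0`. -/
def Ultradiscretizes (x : ℝ → ℝ) (X : ℝ) : Prop :=
  (∀ᶠ l in 𝓝[>] 0, 0 < x l) ∧ Tendsto (fun l => l * log (x l)) (𝓝[>] 0) (𝓝 X)

namespace Ultradiscretizes

variable {x y : ℝ → ℝ} {X Y : ℝ}

lemma exp_div (a : ℝ) : Ultradiscretizes (fun l => exp (a / l)) a := by
  refine ⟨.of_forall fun l => exp_pos _, tendsto_const_nhds.congr' ?_⟩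
  filter_upwards [self_mem_nhdsWithin] with l (hl : 0 < l)
  rw [log_exp, mul_div_cancel₀ _ hl.ne']

lemma mul (hx : Ultradiscretizes x X) (hy : Ultradiscretizes y Y) :
    Ultradiscretizes (fun l => x l * y l) (X + Y) := by
  refine ⟨(hx.1.and hy.1).mono fun l h => mul_pos h.1 h.2, (hx.2.add hy.2).congr' ?_⟩
  filter_upwards [hx.1, hy.1] with l hxl hyl
  rw [log_mul hxl.ne' hyl.ne', mul_add]

lemma inv (hx : Ultradiscretizes x X) : Ultradiscretizes (fun l => (x l)⁻¹) (-X) := by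
  refine ⟨hx.1.mono fun l h => inv_pos.2 h, hx.2.neg.congr fun l => ?_⟩
  rw [log_inv, mul_neg]

lemma div (hx : Ultradiscretizes x X) (hy : Ultradiscretizes y Y) :
    Ultradiscretizes (fun l => x l / y l) (X - Y) := by
  simpa only [div_eq_mul_inv, sub_eq_add_neg] using hx.mul hy.inv

lemma add (hx : Ultradiscretizes x X) (hy : Ultradiscretizes y Y) :
    Ultradiscretizes (fun l => x l + y l) (max X Y) := by
  refine ⟨(hx.1.and hy.1).mono fun l h => add_pos h.1 h.2, ?_⟩
  have hlog2 : Tendsto (fun l : ℝ => l * log 2) (𝓝[>] 0) (𝓝 0) := by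
    simpa using
      (tendsto_nhdsWithin_of_tendsto_nhds (tendsto_id (x := 𝓝 (0 : ℝ)))).mul_const (log 2)
  refine tendsto_of_tendsto_of_tendsto_of_le_of_le' (hx.2.max hy.2)
    (by simpa using (hx.2.max hy.2).add hlog2) ?_ ?_ <;>
    filter_upwards [self_mem_nhdsWithin, hx.1, hy.1] with l (hl : 0 < l) hxl hyl
  · exact max_le (by gcongr; linarith) (by gcongr; linarith)
  · calc l * log (x l + y l) ≤ l * (log 2 + max (log (x l)) (log (y l))) := by
          gcongr; exact log_add_le_log_two_add_max hxl hyl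
      _ = max (l * log (x l)) (l * log (y l)) + l * log 2 := by
          rw [mul_add, mul_max_of_nonneg _ _ hl.le, add_comm]

end Ultradiscretizes

theorem ultradiscrete_oregonator_u_step (U V A F Q E : ℝ) :
    Tendsto (fun l : ℝ =>
        l * Real.log
          (((Real.exp (E / l))⁻¹ * Real.exp (U / l) +
              Real.exp (A / l) * Real.exp (U / l) +
              Real.exp (A / l) * Real.exp (F / l) * Real.exp (Q / l) * Real.exp (V / l) /
                (Real.exp (U / l) + Real.exp (Q / l))) /
            ((Real.exp (E / l))⁻¹ +
              Real.exp (A / l) * Real.exp (U / l) +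
              Real.exp (A / l) * Real.exp (F / l) * Real.exp (V / l) /
                (Real.exp (U / l) + Real.exp (Q / l)))))
      (nhdsWithin 0 (Set.Ioi 0))
      (nhds (max (U - E) (max (A + U) (A + F + Q + V - max U Q)) -
             max (-E) (max (A + U) (A + F + V - max U Q)))) := by
  open Ultradiscretizes in
  have u := exp_div U; have v := exp_div V; have a := exp_div A
  have f := exp_div F; have q := exp_div Q; have e := exp_div E
  have h := ((((e.inv.mul u).add (a.mul u)).add ((((a.mul f).mul q).mul v).div (u.add q))).div
    ((e.inv.add (a.mul u)).add (((a.mul f).mul v).div (u.add q)))).2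
  rwa [max_assoc, max_assoc, neg_add_eq_sub] at h
end

section
/- Let W : ℕ → ℤ² → ℤ be defined by the recursion W_{n+1}(j,k) = max(2·M(W_n)(j,k) − M'(W_{n−1})(j,k) − 1, 0), where M(W)(j,k) = max(W(j,k), W(j−α,k), W(j+α,k), W(j,k−α), W(j,k+α)) and M' is the analogous maximum with shift β. If W_0 and W_1 take values only in {0,1}, then W_n takes values only in {0,1} for all n. -/
lemma max_mem_binary {a b : ℤ} (ha : a ∈ ({0,1} : Set ℤ)) (hb : b ∈ ({0,1} : Set ℤ)) :
    max a b ∈ ({0,1} : Set ℤ) := by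
  rcases ha with ha | ha <;> rcases hb with hb | hb <;> simp_all [max_def] <;> omega

theorem ca_states_binary (α β : ℤ) (W : ℕ → ℤ → ℤ → ℤ)
    (hrec : ∀ n j k, W (n + 2) j k =
      max (2 * (max (W (n + 1) j k) (max (W (n + 1) (j - α) k) (max (W (n + 1) (j + α) k)
              (max (W (n + 1) j (k - α)) (W (n + 1) j (k + α)))))) -
           (max (W n j k) (max (W n (j - β) k) (max (W n (j + β) k)
              (max (W n j (k - β)) (W n j (k + β)))))) - 1) 0)
    (h0 : ∀ j k, W 0 j k ∈ ({0, 1} : Set ℤ))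
    (h1 : ∀ j k, W 1 j k ∈ ({0, 1} : Set ℤ)) :
    ∀ n j k, W n j k ∈ ({0, 1} : Set ℤ) := by
  intro n
  induction n using Nat.strong_induction_on with
  | _ n ih =>
    match n with
    | 0 => exact h0
    | 1 => exact h1
    | (m + 2) =>
      intro j k
      have hA : (max (W (m + 1) j k) (max (W (m + 1) (j - α) k) (max (W (m + 1) (j + α) k)
              (max (W (m + 1) j (k - α)) (W (m + 1) j (k + α)))))) ∈ ({0,1} : Set ℤ) := by
        have h := ih (m+1) (by omega)
        exact max_mem_binary (h _ _) (max_mem_binary (h _ _) (max_mem_binary (h _ _)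
          (max_mem_binary (h _ _) (h _ _))))
      have hB : (max (W m j k) (max (W m (j - β) k) (max (W m (j + β) k)
              (max (W m j (k - β)) (W m j (k + β)))))) ∈ ({0,1} : Set ℤ) := by
        have h := ih m (by omega)
        exact max_mem_binary (h _ _) (max_mem_binary (h _ _) (max_mem_binary (h _ _)
          (max_mem_binary (h _ _) (h _ _))))
      rw [hrec m j k]
      rcases hA with hA | hA <;> rcases hB with hB | hB <;>
        simp -failIfUnchanged only [Set.mem_singleton_iff] at hA hB <;> rw [hA, hB] <;>
        simp [max_def] <;> omega
end

section
/- Let 0 < F < Q and suppose U_{n−1} ≤ Q and U_n ≤ Q. Then U_{n+1} = max{U_n, F+Q+U_{n−1}−max(U_n,Q)} − max{U_n, F+U_{n−1}−max(U_n,Q)} satisfies: U_{n+1} = 0 if F + U_{n−1} − U_n ≤ 0; U_{n+1} = F + U_{n−1} − U_n if −F < U_{n−1} − U_n < Q − F; and U_{n+1} = Q if F − Q + U_{n−1} − U_n ≥ 0. In particular U_{n+1} ≤ Q. -/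
/-! Since `v ≤ Q`, the term `max v Q` is just `Q`, and after pulling `v` out of both maxima the
update reads `max 0 d - max 0 (d - Q)` with `d = F + u - v`: this is `d` clamped to `[0, Q]`, and
the three regimes of the theorem are the three pieces of the clamp. -/

section Clamp

variable {α : Type*} [AddCommGroup α] [LinearOrder α] [IsOrderedAddMonoid α]

theorem max_add_sub_max_add_sub (v d Q : α) :
    max v (v + d) - max v (v + d - Q) = max 0 d - max 0 (d - Q) := by
  have pull (x : α) : max v (v + x) = v + max 0 x := by rw [← max_add_add_left, add_zero]
  rw [add_sub_assoc, pull, pull, add_sub_add_left_eq_sub]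

theorem max_zero_sub_max_zero_sub_eq_clamp {Q : α} (hQ : 0 ≤ Q) (d : α) :
    max 0 d - max 0 (d - Q) = max 0 (min d Q) := by
  rcases le_total d 0 with hd | hd
  · have hdQ : d - Q ≤ 0 := sub_nonpos.mpr (hd.trans hQ)
    rw [max_eq_left hd, max_eq_left hdQ, min_eq_left (hd.trans hQ), max_eq_left hd, sub_zero]
  rcases le_total d Q with hdQ | hdQ
  · rw [max_eq_left (sub_nonpos.mpr hdQ), min_eq_left hdQ, max_eq_right hd, sub_zero]
  · rw [max_eq_right (sub_nonneg.mpr hdQ), min_eq_right hdQ, max_eq_right hd, max_eq_right hQ,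
      sub_sub_cancel]

end Clamp

theorem piecewise_caseII_general (F Q u v : ℝ) (h1 : 0 < F) (h2 : F < Q)
    (hv : v ≤ Q) :
    (F + u - v ≤ 0 → max v (F + Q + u - max v Q) - max v (F + u - max v Q) = 0) ∧
    (-F < u - v → u - v < Q - F →
      max v (F + Q + u - max v Q) - max v (F + u - max v Q) = F + u - v) ∧
    (0 ≤ F - Q + u - v → max v (F + Q + u - max v Q) - max v (F + u - max v Q) = Q) ∧
    max v (F + Q + u - max v Q) - max v (F + u - max v Q) ≤ Q := by
  have hQ : 0 ≤ Q := by linarith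
  have clamp : max v (F + Q + u - max v Q) - max v (F + u - max v Q)
      = max 0 (min (F + u - v) Q) := by
    have upper : F + Q + u - Q = v + (F + u - v) := by ring
    have lower : F + u - Q = v + (F + u - v) - Q := by ring
    rw [max_eq_right hv, upper, lower, max_add_sub_max_add_sub,
      max_zero_sub_max_zero_sub_eq_clamp hQ]
  refine ⟨fun h => ?_, fun h h' => ?_, fun h => ?_, ?_⟩ <;> rw [clamp]
  · rw [min_eq_left (h.trans hQ), max_eq_left h]
  · rw [min_eq_left (by linarith), max_eq_right (by linarith)]
  · rw [min_eq_right (by linarith), max_eq_right hQ]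
  · exact max_le hQ (min_le_right _ _)

theorem piecewise_caseII (F Q u v : ℝ) (h1 : 0 < F) (h2 : F < Q)
    (hu : u ≤ Q) (hv : v ≤ Q) :
    (F + u - v ≤ 0 → max v (F + Q + u - max v Q) - max v (F + u - max v Q) = 0) ∧
    (-F < u - v → u - v < Q - F →
      max v (F + Q + u - max v Q) - max v (F + u - max v Q) = F + u - v) ∧
    (0 ≤ F - Q + u - v → max v (F + Q + u - max v Q) - max v (F + u - max v Q) = Q) ∧
    max v (F + Q + u - max v Q) - max v (F + u - max v Q) ≤ Q :=
  piecewise_caseII_general F Q u v h1 h2 hv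
end

section
/- Let 0 < F < Q. If U_n ≥ Q, then U_{n+1} = max{U_n, F+Q+U_{n−1}−max(U_n,Q)} − max{U_n, F+U_{n−1}−max(U_n,Q)} satisfies U_{n+1} ≤ Q. Hence the region {U ≤ Q} is absorbing: for any initial values, U_m ≤ Q holds for all m ≥ 2. -/
theorem region_absorbing (F Q : ℝ) (h1 : 0 < F) (h2 : F < Q) (U : ℕ → ℝ)
    (hrec : ∀ n, U (n + 2) =
      max (U (n + 1)) (F + Q + U n - max (U (n + 1)) Q) -
        max (U (n + 1)) (F + U n - max (U (n + 1)) Q)) :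
    (∀ n, Q ≤ U (n + 1) → U (n + 2) ≤ Q) ∧ ∀ m, 2 ≤ m → U m ≤ Q := by
  have key : ∀ n, U (n + 2) ≤ Q := by
    intro n
    rw [hrec n]
    have h := le_max_left (U (n + 1)) (F + U n - max (U (n + 1)) Q)
    have h' := le_max_right (U (n + 1)) (F + U n - max (U (n + 1)) Q)
    have : max (U (n + 1)) (F + Q + U n - max (U (n + 1)) Q) ≤
        max (U (n + 1)) (F + U n - max (U (n + 1)) Q) + Q := by
      apply max_le <;> linarith
    linarith
  refine ⟨fun n _ => key n, fun m hm => ?_⟩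
  obtain ⟨n, rfl⟩ := Nat.exists_eq_add_of_le hm
  rw [add_comm]
  exact key n
end

section
/- Let 0 < F < Q with F, Q, U₀, U₁ ∈ ℤ and let U : ℕ → ℤ satisfy the diffusion-free ultradiscrete Oregonator recursion U_{n+1} = max{U_n, F+Q+U_{n−1}−max(U_n,Q)} − max{U_n, F+U_{n−1}−max(U_n,Q)}. Then either U_n = F for all n (which occurs iff U₀ = U₁ = F), or there exists N such that U_{N+2m} = 0 and U_{N+2m+1} = Q for all m ≥ 0, i.e., U eventually settles into the 2-periodic solution (0, Q, 0, Q, …). -/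
/-!
For `0 < F < Q` every value from `U 2` on lies in `[0, Q]`, and the recursion becomes
`U (n + 2) = F + U n - U (n + 1)` clamped to `[0, Q]`. If a value `Q` (from index 3 on) or `0`
(from index 4 on) ever occurs, the pairs `(Q, y)` resp. `(0, z)` move monotonically towards
`(Q, 0)` resp. `(0, Q)`, after which the orbit alternates `0, Q, 0, Q, …`. Otherwise the clamp
is never active, and `V = U - F` satisfies `V (n + 2) = V n - V (n + 1)`, whose characteristic
roots are `(-1 ± √5) / 2`: a bounded integer solution must vanish. Finally `F, F` forces `F`
both forwards and backwards, so the orbit is constantly `F`.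
-/

open Filter

theorem forall_of_eventually_of_imp_succ_succ {P : ℕ → Prop}
    (h : ∀ n, P (n + 1) → P (n + 2) → P n) (hP : ∀ᶠ n in atTop, P n) : ∀ n, P n := by
  obtain ⟨N, hN⟩ := eventually_atTop.1 hP
  suffices ∀ j n, N ≤ n + j → P n from fun n => this N n (by omega)
  intro j
  induction j with
  | zero => exact hN
  | succ j ih =>
    intro n hn
    by_cases hNn : N ≤ n
    · exact hN n hNn
    · exact h n (ih (n + 1) (by omega)) (ih (n + 2) (by omega))

section NegFibonacci

variable {V : ℕ → ℤ}

theorem eventually_nonpos_of_bddAbove (hV : ∀ n, V (n + 2) = V n - V (n + 1))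
    (hB : BddAbove (Set.range V)) : ∀ᶠ n in atTop, V n ≤ 0 := by
  by_contra hpos
  have hlb : ∀ S, (∀ᶠ n in atTop, V n ≤ S) → 1 ≤ S := fun S hS => by
    by_contra hS1
    exact hpos (hS.mono fun n hn => by omega)
  obtain ⟨B, hB⟩ := hB
  -- `S` is the limit superior of `V`
  obtain ⟨S, hS, hSmin⟩ := Int.exists_least_of_bdd (P := fun S => ∀ᶠ n in atTop, V n ≤ S)
    ⟨1, hlb⟩ ⟨B, Eventually.of_forall fun n => hB ⟨n, rfl⟩⟩
  have hfreq : ∃ᶠ n in atTop, S ≤ V n := by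
    have hS1 : ¬ ∀ᶠ n in atTop, V n ≤ S - 1 := fun h => by linarith [hSmin _ h]
    exact (not_eventually.1 hS1).mono fun n hn => by omega
  obtain ⟨N, hN⟩ := eventually_atTop.1 hS
  obtain ⟨k, hk, hVk⟩ := frequently_atTop.1 hfreq (N + 1)
  obtain ⟨j, rfl⟩ : ∃ j, k = j + 1 := ⟨k - 1, by omega⟩
  -- from `V j ≤ S = V (j + 1)` the recursion gives `V (j + 5) = 3 S - 3 V j ≥ S`
  have := hN j (by omega)
  have := hN (j + 1) (by omega)
  have := hN (j + 5) (by omega)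
  have := hV j; have := hV (j + 1); have := hV (j + 2); have := hV (j + 3)
  linarith [hlb S hS]

theorem eq_zero_of_bddAbove_of_bddBelow (hV : ∀ n, V (n + 2) = V n - V (n + 1))
    (hA : BddAbove (Set.range V)) (hB : BddBelow (Set.range V)) : ∀ n, V n = 0 := by
  have hneg : ∀ᶠ n in atTop, -V n ≤ 0 :=
    eventually_nonpos_of_bddAbove (V := fun n => -V n) (fun n => by rw [hV]; ring)
      (let ⟨b, hb⟩ := hB; ⟨-b, by rintro _ ⟨n, rfl⟩; linarith [hb ⟨n, rfl⟩]⟩)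
  refine forall_of_eventually_of_imp_succ_succ (fun n h1 h2 => ?_)
    ((eventually_nonpos_of_bddAbove hV hA).and hneg |>.mono fun n hn => by omega)
  have := hV n
  omega

end NegFibonacci

/-- One step of the ultradiscrete Oregonator: with `u = U (n - 1)` and `v = U n` it returns
`U (n + 1)`. -/
def oregonatorStep (F Q u v : ℤ) : ℤ :=
  max v (F + Q + u - max v Q) - max v (F + u - max v Q)

theorem oregonatorStep_mem_Icc {Q : ℤ} (hQ : 0 ≤ Q) (F u v : ℤ) :
    oregonatorStep F Q u v ∈ Set.Icc 0 Q := by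
  unfold oregonatorStep
  constructor <;> omega

theorem oregonatorStep_of_le {Q v : ℤ} (hQ : 0 ≤ Q) (hv : v ≤ Q) (F u : ℤ) :
    oregonatorStep F Q u v = max 0 (min (F + u - v) Q) := by
  unfold oregonatorStep
  omega

def IsOregonatorSolution (F Q : ℤ) (U : ℕ → ℤ) : Prop :=
  ∀ n, U (n + 2) = oregonatorStep F Q (U n) (U (n + 1))

namespace IsOregonatorSolution

variable {F Q : ℤ} {U : ℕ → ℤ}

theorem mem_Icc (hU : IsOregonatorSolution F Q U) (hQ : 0 ≤ Q) {n : ℕ} (hn : 2 ≤ n) :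
    U n ∈ Set.Icc 0 Q := by
  obtain ⟨k, rfl⟩ : ∃ k, n = k + 2 := ⟨n - 2, by omega⟩
  exact hU k ▸ oregonatorStep_mem_Icc hQ _ _ _

theorem eq_clamp_of_le (hU : IsOregonatorSolution F Q U) (hQ : 0 ≤ Q) {n : ℕ}
    (h : U (n + 1) ≤ Q) : U (n + 2) = max 0 (min (F + U n - U (n + 1)) Q) :=
  (hU n).trans (oregonatorStep_of_le hQ h _ _)

theorem eq_clamp (hU : IsOregonatorSolution F Q U) (hQ : 0 ≤ Q) {n : ℕ} (hn : 1 ≤ n) :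
    U (n + 2) = max 0 (min (F + U n - U (n + 1)) Q) :=
  hU.eq_clamp_of_le hQ (hU.mem_Icc hQ (by omega)).2

theorem eq_const_of_init (hU : IsOregonatorSolution F Q U) (hF : 0 ≤ F) (hFQ : F ≤ Q)
    (h0 : U 0 = F) (h1 : U 1 = F) : ∀ n, U n = F := by
  suffices ∀ n, U n = F ∧ U (n + 1) = F from fun n => (this n).1
  intro n
  induction n with
  | zero => exact ⟨h0, h1⟩
  | succ n ih =>
    have hstep := hU.eq_clamp_of_le (by omega) (n := n) (by omega)
    exact ⟨ih.2, show U (n + 2) = F by omega⟩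

theorem eq_const_of_eventually (hU : IsOregonatorSolution F Q U) (hF : 0 < F) (hFQ : F < Q)
    (h : ∀ᶠ n in atTop, U n = F) : ∀ n, U n = F := by
  refine forall_of_eventually_of_imp_succ_succ (fun n h1 h2 => ?_) h
  have hstep := hU.eq_clamp_of_le (by omega) (n := n) (by omega)
  omega

theorem zero_Q_cycle (hU : IsOregonatorSolution F Q U) (hF : 0 ≤ F) (hFQ : F ≤ Q) {N : ℕ}
    (h0 : U N = 0) (h1 : U (N + 1) = Q) : ∀ m : ℕ, U (N + 2 * m) = 0 ∧ U (N + 2 * m + 1) = Q := by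
  have hQ : 0 ≤ Q := hF.trans hFQ
  intro m
  induction m with
  | zero => exact ⟨h0, h1⟩
  | succ m ih =>
    have h2 := hU.eq_clamp_of_le hQ (n := N + 2 * m) ih.2.le
    have hz : U (N + 2 * m + 2) = 0 := by omega
    have h3 := hU.eq_clamp_of_le hQ (n := N + 2 * m + 1) (hz.trans_le hQ)
    rw [ih.2, show N + 2 * m + 1 + 1 = N + 2 * m + 2 by ring, hz] at h3
    exact ⟨hz, by rw [show N + 2 * (m + 1) + 1 = N + 2 * m + 1 + 2 by ring, h3]; omega⟩

theorem eq_Q_of_eq_Q (hU : IsOregonatorSolution F Q U) (hFQ : F ≤ Q) {n : ℕ}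
    (hQn : U n = Q) (hy : U (n + 1) ∈ Set.Icc 0 F) :
    U (n + 2) = Q ∧ U (n + 3) = max 0 (F + U (n + 1) - Q) := by
  obtain ⟨hy0, hyF⟩ := hy
  have hQ : 0 ≤ Q := hy0.trans (hyF.trans hFQ)
  have h2 := hU.eq_clamp_of_le hQ (n := n) (by omega)
  rw [hQn] at h2
  have h3 : U (n + 3) = max 0 (min (F + U (n + 1) - U (n + 2)) Q) :=
    hU.eq_clamp_of_le hQ (n := n + 1) (show U (n + 2) ≤ Q by omega)
  exact ⟨by omega, by omega⟩

theorem eq_zero_of_eq_zero (hU : IsOregonatorSolution F Q U) (hF : 0 ≤ F) {n : ℕ}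
    (h0 : U n = 0) (hz : U (n + 1) ∈ Set.Icc F Q) :
    U (n + 2) = 0 ∧ U (n + 3) = min (F + U (n + 1)) Q := by
  obtain ⟨hzF, hzQ⟩ := hz
  have hQ : 0 ≤ Q := hF.trans (hzF.trans hzQ)
  have h2 := hU.eq_clamp_of_le hQ (n := n) hzQ
  rw [h0] at h2
  have h3 : U (n + 3) = max 0 (min (F + U (n + 1) - U (n + 2)) Q) :=
    hU.eq_clamp_of_le hQ (n := n + 1) (show U (n + 2) ≤ Q by omega)
  exact ⟨by omega, by omega⟩

theorem exists_zero_Q_of_eq_Q_of_mem_Icc (hU : IsOregonatorSolution F Q U) (hFQ : F < Q)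
    {n : ℕ} (hQn : U n = Q) (hy : U (n + 1) ∈ Set.Icc 0 F) :
    ∃ N, U N = 0 ∧ U (N + 1) = Q := by
  obtain ⟨d, hd⟩ : ∃ d : ℕ, U (n + 1) ≤ d := ⟨(U (n + 1)).toNat, Int.self_le_toNat _⟩
  induction d generalizing n with
  | zero => exact ⟨n + 1, by grind, (hU.eq_Q_of_eq_Q hFQ.le hQn hy).1⟩
  | succ d ih =>
    obtain ⟨h2, h3⟩ := hU.eq_Q_of_eq_Q hFQ.le hQn hy
    obtain ⟨hy0, hyF⟩ := hy
    by_cases hy_eq : U (n + 1) = 0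
    · exact ⟨n + 1, hy_eq, h2⟩
    · refine ih h2 ?_ ?_
      · show U (n + 3) ∈ _
        rw [h3]
        constructor <;> omega
      · show U (n + 3) ≤ _
        omega

theorem exists_zero_Q_of_eq_zero_of_mem_Icc (hU : IsOregonatorSolution F Q U) (hF : 0 < F)
    {n : ℕ} (h0 : U n = 0) (hz : U (n + 1) ∈ Set.Icc F Q) :
    ∃ N, U N = 0 ∧ U (N + 1) = Q := by
  obtain ⟨d, hd⟩ : ∃ d : ℕ, Q - U (n + 1) ≤ d := ⟨(Q - U (n + 1)).toNat, Int.self_le_toNat _⟩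
  induction d generalizing n with
  | zero => exact ⟨n, h0, by grind⟩
  | succ d ih =>
    obtain ⟨h2, h3⟩ := hU.eq_zero_of_eq_zero hF.le h0 hz
    obtain ⟨hzF, hzQ⟩ := hz
    by_cases hz_eq : U (n + 1) = Q
    · exact ⟨n, h0, hz_eq⟩
    · refine ih h2 ?_ ?_
      · show U (n + 3) ∈ _
        rw [h3]
        constructor <;> omega
      · show Q - U (n + 3) ≤ _
        omega

theorem exists_zero_Q_of_eq_Q (hU : IsOregonatorSolution F Q U) (hF : 0 < F) (hFQ : F < Q)
    {n : ℕ} (hn : 3 ≤ n) (hQn : U n = Q) : ∃ N, U N = 0 ∧ U (N + 1) = Q := by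
  obtain ⟨k, rfl⟩ : ∃ k, n = k + 1 := ⟨n - 1, by omega⟩
  obtain ⟨hk0, hkQ⟩ := hU.mem_Icc (by omega) (n := k) (by omega)
  have h2 := hU.eq_clamp_of_le (by omega) (n := k) hQn.le
  refine hU.exists_zero_Q_of_eq_Q_of_mem_Icc hFQ hQn ?_
  rw [hQn] at h2
  show U (k + 2) ∈ _
  constructor <;> omega

theorem exists_zero_Q_of_eq_zero (hU : IsOregonatorSolution F Q U) (hF : 0 < F) (hFQ : F ≤ Q)
    {n : ℕ} (hn : 4 ≤ n) (h0 : U n = 0) : ∃ N, U N = 0 ∧ U (N + 1) = Q := by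
  obtain ⟨k, rfl⟩ : ∃ k, n = k + 2 := ⟨n - 2, by omega⟩
  have hQ : 0 ≤ Q := by omega
  obtain ⟨hk0, hkQ⟩ := hU.mem_Icc hQ (n := k) (by omega)
  obtain ⟨hk10, hk1Q⟩ := hU.mem_Icc hQ (n := k + 1) (by omega)
  have h2 := hU.eq_clamp hQ (n := k) (by omega)
  have h3 : U (k + 3) = max 0 (min (F + U (k + 1) - U (k + 2)) Q) :=
    hU.eq_clamp hQ (n := k + 1) (by omega)
  refine hU.exists_zero_Q_of_eq_zero_of_mem_Icc hF h0 ?_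
  show U (k + 3) ∈ _
  constructor <;> omega

theorem eventually_eq_of_ne (hU : IsOregonatorSolution F Q U) (hQ : 0 ≤ Q)
    (h : ∀ n, 4 ≤ n → U n ≠ 0 ∧ U n ≠ Q) : ∀ᶠ n in atTop, U n = F := by
  have hIcc (n : ℕ) : U (n + 4) ∈ Set.Icc 0 Q := hU.mem_Icc hQ (by omega)
  -- the clamp is never active, so `U - F` solves `V (n + 2) = V n - V (n + 1)`
  have hV (n : ℕ) : U (n + 2 + 4) - F = (U (n + 4) - F) - (U (n + 1 + 4) - F) := by
    have h6 : U (n + 6) = max 0 (min (F + U (n + 4) - U (n + 5)) Q) :=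
      hU.eq_clamp hQ (n := n + 4) (by omega)
    obtain ⟨_, _⟩ := h (n + 6) (by omega)
    show U (n + 6) - F = (U (n + 4) - F) - (U (n + 5) - F)
    omega
  have hzero := eq_zero_of_bddAbove_of_bddBelow (V := fun n => U (n + 4) - F) hV
    ⟨Q - F, by rintro _ ⟨n, rfl⟩; obtain ⟨_, _⟩ := hIcc n; simp only; omega⟩
    ⟨-F, by rintro _ ⟨n, rfl⟩; obtain ⟨_, _⟩ := hIcc n; simp only; omega⟩
  refine eventually_atTop.2 ⟨4, fun n hn => ?_⟩
  obtain ⟨k, rfl⟩ : ∃ k, n = k + 4 := ⟨n - 4, by omega⟩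
  have := hzero k
  omega

end IsOregonatorSolution

theorem global_convergence (F Q : ℤ) (h1 : 0 < F) (h2 : F < Q) (U : ℕ → ℤ)
    (hrec : ∀ n, U (n + 2) =
      max (U (n + 1)) (F + Q + U n - max (U (n + 1)) Q) -
        max (U (n + 1)) (F + U n - max (U (n + 1)) Q)) :
    ((∀ n, U n = F) ↔ U 0 = F ∧ U 1 = F) ∧
      ((∀ n, U n = F) ∨
        ∃ N, ∀ m : ℕ, U (N + 2 * m) = 0 ∧ U (N + 2 * m + 1) = Q) := by
  have hU : IsOregonatorSolution F Q U := hrec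
  refine ⟨⟨fun h => ⟨h 0, h 1⟩, fun h => hU.eq_const_of_init h1.le h2.le h.1 h.2⟩, ?_⟩
  suffices (∀ᶠ n in atTop, U n = F) ∨ ∃ N, U N = 0 ∧ U (N + 1) = Q by
    rcases this with hF | ⟨N, hN0, hNQ⟩
    · exact Or.inl (hU.eq_const_of_eventually h1 h2 hF)
    · exact Or.inr ⟨N, hU.zero_Q_cycle h1.le h2.le hN0 hNQ⟩
  have hQ : 0 ≤ Q := (h1.trans h2).le
  by_cases h : ∃ n, 4 ≤ n ∧ (U n = 0 ∨ U n = Q)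
  · obtain ⟨n, hn, hn0 | hnQ⟩ := h
    · exact Or.inr (hU.exists_zero_Q_of_eq_zero h1 h2.le hn hn0)
    · exact Or.inr (hU.exists_zero_Q_of_eq_Q h1 h2 (by omega) hnQ)
  · push Not at h
    exact Or.inl (hU.eventually_eq_of_ne hQ h)
end

section
/- Let 0 < F < Q be integers and define intervals I₁ = (−∞, −F], I₂ = (−F, Q−F), I₃ = [Q−F, ∞). Suppose U satisfies the case-(II) recursion U_{n+1} = 0 if Ψ_n ≤ −F, U_{n+1} = F + Ψ_n if −F < Ψ_n < Q−F, U_{n+1} = Q if Ψ_n ≥ Q−F, where Ψ_n = U_{n−1} − U_n. If (Ψ_n, Ψ_{n+1}) ∈ I₂ × I₁ for some n, then there exists n' > n with (Ψ_{n'}, Ψ_{n'+1}) ∈ I₁ × I₃. -/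
/-!
Write `Ψ m = U m - U (m + 1)`. If `(Ψ m, Ψ (m + 1)) ∈ I₂ × I₁`, the recursion forces `U (m + 2) = F + Ψ m`
and `U (m + 3) = 0`, so `Ψ (m + 2) = Ψ m + F > 0`. Either `Ψ (m + 2) ∈ I₃`, and then `U (m + 4) = Q`,
`U (m + 5) = 0` give `(Ψ (m + 3), Ψ (m + 4)) = (-Q, Q) ∈ I₁ × I₃`; or `Ψ (m + 2) ∈ I₂`, and then
`U (m + 4) = F + Ψ (m + 2)` puts `(Ψ (m + 2), Ψ (m + 3))` back in `I₂ × I₁`. Since `Ψ` grows by `F` each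
time, the second case can only recur finitely often.
-/

open Set

namespace Oregonator

/-- The right-hand side of the case-(II) recursion `U (n + 2) = oregonatorMap F Q (Ψ n)`. -/
def oregonatorMap (F Q ψ : ℤ) : ℤ :=
  if ψ ≤ -F then 0 else if ψ < Q - F then F + ψ else Q

def psi (U : ℕ → ℤ) (n : ℕ) : ℤ := U n - U (n + 1)

abbrev I₁ (F : ℤ) : Set ℤ := Iic (-F)

abbrev I₂ (F Q : ℤ) : Set ℤ := Ioo (-F) (Q - F)

abbrev I₃ (F Q : ℤ) : Set ℤ := Ici (Q - F)

section Map

variable {F Q ψ : ℤ}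

theorem oregonatorMap_of_mem_I₁ (h : ψ ∈ I₁ F) : oregonatorMap F Q ψ = 0 :=
  if_pos h

theorem oregonatorMap_of_mem_I₂ (h : ψ ∈ I₂ F Q) : oregonatorMap F Q ψ = F + ψ := by
  rw [oregonatorMap, if_neg h.1.not_ge, if_pos h.2]

theorem oregonatorMap_of_mem_I₃ (hQ : 0 < Q) (h : ψ ∈ I₃ F Q) : oregonatorMap F Q ψ = Q := by
  have h' : Q - F ≤ ψ := h
  rw [oregonatorMap, if_neg (by omega), if_neg h'.not_gt]

end Map

section Orbit

variable {F Q : ℤ} {U : ℕ → ℤ} (hrec : ∀ n, U (n + 2) = oregonatorMap F Q (psi U n))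
include hrec

theorem psi_add_two_of_mem_I₂_I₁ {m : ℕ} (h₂ : psi U m ∈ I₂ F Q)
    (h₁ : psi U (m + 1) ∈ I₁ F) : psi U (m + 2) = F + psi U m := by
  have hU₂ : U (m + 2) = F + psi U m := (hrec m).trans (oregonatorMap_of_mem_I₂ h₂)
  have hU₃ : U (m + 3) = 0 := (hrec (m + 1)).trans (oregonatorMap_of_mem_I₁ h₁)
  rw [psi, hU₂, hU₃, sub_zero]

theorem mem_I₁_I₃_add_two (hF : 0 ≤ F) (hFQ : F < Q) {m : ℕ}
    (h₁ : psi U m ∈ I₁ F) (h₃ : psi U (m + 1) ∈ I₃ F Q) :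
    psi U (m + 2) ∈ I₁ F ∧ psi U (m + 3) ∈ I₃ F Q := by
  have hU₂ : U (m + 2) = 0 := (hrec m).trans (oregonatorMap_of_mem_I₁ h₁)
  have hU₃ : U (m + 3) = Q := (hrec (m + 1)).trans (oregonatorMap_of_mem_I₃ (by omega) h₃)
  have hψ₂ : psi U (m + 2) ∈ I₁ F := by
    show U (m + 2) - U (m + 3) ≤ -F
    omega
  have hU₄ : U (m + 4) = 0 := (hrec (m + 2)).trans (oregonatorMap_of_mem_I₁ hψ₂)
  refine ⟨hψ₂, ?_⟩
  show Q - F ≤ U (m + 3) - U (m + 4)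
  omega

theorem mem_I₂_I₁_add_two_of_mem_I₂_I₁ (hF : 0 < F) {m : ℕ}
    (h₂ : psi U m ∈ I₂ F Q) (h₁ : psi U (m + 1) ∈ I₁ F)
    (hnot₃ : psi U (m + 2) < Q - F) :
    psi U (m + 2) ∈ I₂ F Q ∧ psi U (m + 3) ∈ I₁ F := by
  have hψ₂ := psi_add_two_of_mem_I₂_I₁ hrec h₂ h₁
  have hψ₂_pos : 0 < psi U (m + 2) := by rw [hψ₂]; linarith [h₂.1]
  have hmem : psi U (m + 2) ∈ I₂ F Q := ⟨by linarith, hnot₃⟩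
  have hU₃ : U (m + 3) = 0 := (hrec (m + 1)).trans (oregonatorMap_of_mem_I₁ h₁)
  have hU₄ : U (m + 4) = F + psi U (m + 2) := (hrec (m + 2)).trans (oregonatorMap_of_mem_I₂ hmem)
  refine ⟨hmem, ?_⟩
  show U (m + 3) - U (m + 4) ≤ -F
  omega

theorem exists_mem_I₁_I₃_of_mem_I₂_I₁ (hF : 0 < F) (hFQ : F < Q) (m : ℕ)
    (h₂ : psi U m ∈ I₂ F Q) (h₁ : psi U (m + 1) ∈ I₁ F) :
    ∃ n' > m, psi U n' ∈ I₁ F ∧ psi U (n' + 1) ∈ I₃ F Q := by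
  rcases le_or_gt (Q - F) (psi U (m + 2)) with h₃ | h₃
  · exact ⟨m + 3, by omega, mem_I₁_I₃_add_two hrec hF.le hFQ h₁ h₃⟩
  · -- `hψ₂` is what `decreasing_by` uses: `Ψ` has grown by `F > 0`.
    have hψ₂ := psi_add_two_of_mem_I₂_I₁ hrec h₂ h₁
    obtain ⟨h₂', h₁'⟩ := mem_I₂_I₁_add_two_of_mem_I₂_I₁ hrec hF h₂ h₁ h₃
    obtain ⟨n', hlt, hn'⟩ := exists_mem_I₁_I₃_of_mem_I₂_I₁ hF hFQ (m + 2) h₂' h₁'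
    exact ⟨n', by omega, hn'⟩
termination_by (Q - F - psi U m).toNat
decreasing_by omega

end Orbit

end Oregonator

theorem escape_I2_I1 (F Q : ℤ) (h1 : 0 < F) (h2 : F < Q) (U : ℕ → ℤ)
    (hrec : ∀ n, U (n + 2) =
      if U n - U (n + 1) ≤ -F then 0
      else if U n - U (n + 1) < Q - F then F + (U n - U (n + 1))
      else Q)
    (n : ℕ)
    (hI2 : -F < U n - U (n + 1) ∧ U n - U (n + 1) < Q - F)
    (hI1 : U (n + 1) - U (n + 2) ≤ -F) :
    ∃ n' > n, U n' - U (n' + 1) ≤ -F ∧ Q - F ≤ U (n' + 1) - U (n' + 2) :=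
  Oregonator.exists_mem_I₁_I₃_of_mem_I₂_I₁ hrec h1 h2 n hI2 hI1
end
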